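/- arXiv:0710.3332 — 3 statements merged into one kernel-verified Lean document; each statement's English description precedes it below -/
import Mathlib

section
/- In a finite Kripke structure M with n states, for any state s and CTL release formula A[φ V ψ]: M, s ⊨ A[φ V ψ] if and only if along every path of length n starting at s, either ψ holds at every state of the path, or there is a position k ≤ n such that ψ holds at all positions up to and including k and φ holds at position k. -/
/-- An infinite path in the structure with transition relation R. -/
def IsPath {St : Type} (R : St → St → Prop) (π : ℕ → St) : Prop :=
  ∀ i, R (π i) (π (i + 1))

/-- M, s ⊨ A[φ V ψ]. -/
def SatAV {St : Type} (R : St → St → Prop) (φ ψ : St → Prop) (s : St) : Prop :=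
  ∀ π : ℕ → St, π 0 = s → IsPath R π →
    ∀ k, (∀ j < k, ¬ φ (π j)) → ψ (π k)

/-!
Both sides are statements about `¬φ`-prefixes: `A[φ V ψ]` fails at `s` iff some path from `s`
reaches a `¬ψ`-state through `¬φ`-states only, and the bounded condition fails iff this happens
within `n` steps. By totality every path of length `n` extends to an infinite one, and by the
pigeonhole principle a `¬φ`-prefix longer than `n` revisits a state, so cutting out the loop
shortens it without changing its endpoints.
-/

lemma release_prefix_iff {p q : ℕ → Prop} {n : ℕ} :
    ((∀ i ≤ n, q i) ∨ ∃ k ≤ n, (∀ i ≤ k, q i) ∧ p k) ↔ ∀ k ≤ n, (∀ j < k, ¬ p j) → q k := by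
  classical
  constructor
  · rintro (hq | ⟨k₀, -, hq, hp⟩) k hk hnp
    · exact hq k hk
    · exact hq k (not_lt.1 fun hlt => hnp k₀ hlt hp)
  · intro h
    by_cases hex : ∃ k ≤ n, p k
    · obtain ⟨hk₀n, hk₀⟩ := Nat.find_spec hex
      refine .inr ⟨Nat.find hex, hk₀n, fun i hi => h i (hi.trans hk₀n) fun j hj hpj => ?_, hk₀⟩
      exact Nat.find_min hex (hj.trans_le hi) ⟨by omega, hpj⟩
    · push Not at hex
      exact .inl fun i hi => h i hi fun j hj => hex j (by omega)

lemma exists_lt_le_card_apply_eq {St : Type} [Fintype St] (f : ℕ → St) :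
    ∃ i j, i < j ∧ j ≤ Fintype.card St ∧ f i = f j := by
  obtain ⟨a, b, hab, heq⟩ := Fintype.exists_ne_map_eq_of_card_lt
    (fun i : Fin (Fintype.card St + 1) => f i) (by simp)
  rcases lt_or_gt_of_ne (Fin.val_ne_of_ne hab) with h | h
  · exact ⟨a, b, h, Nat.lt_succ_iff.1 b.2, heq⟩
  · exact ⟨b, a, h, Nat.lt_succ_iff.1 a.2, heq.symm⟩

section

variable {St : Type} {R : St → St → Prop}

lemma exists_isPath_extend (total : ∀ s, ∃ t, R s t) {π : ℕ → St} {n : ℕ}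
    (hπ : ∀ i < n, R (π i) (π (i + 1))) :
    ∃ π' : ℕ → St, IsPath R π' ∧ ∀ i ≤ n, π' i = π i := by
  choose next hnext using total
  set π' : ℕ → St := fun i => if i ≤ n then π i else next^[i - n] (π n)
  have htail : ∀ i, n ≤ i → π' i = next^[i - n] (π n) := by
    intro i hi
    by_cases hin : i ≤ n
    · obtain rfl : i = n := le_antisymm hin hi
      simp [π']
    · simp [π', hin]
  refine ⟨π', fun i => ?_, fun i hi => if_pos hi⟩
  rcases lt_or_ge i n with hi | hi
  · simpa [π', hi.le, Nat.succ_le_of_lt hi] using hπ i hi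
  · rw [htail i hi, htail (i + 1) (by omega), Nat.sub_add_comm hi,
      Function.iterate_succ_apply']
    exact hnext _

def cutLoop (π : ℕ → St) (i d : ℕ) (t : ℕ) : St :=
  π (if t ≤ i then t else t + d)

lemma IsPath.cutLoop {π : ℕ → St} (hπ : IsPath R π) {i d : ℕ} (hloop : π i = π (i + d)) :
    IsPath R (cutLoop π i d) := by
  intro t
  rcases lt_trichotomy t i with ht | rfl | ht
  · simpa [_root_.cutLoop, ht.le, Nat.succ_le_of_lt ht] using hπ t
  · simpa [_root_.cutLoop, hloop, Nat.add_right_comm] using hπ (t + d)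
  · simpa [_root_.cutLoop, ht.not_ge, (ht.trans (Nat.lt_succ_self t)).not_ge,
      Nat.add_right_comm] using hπ (t + d)

lemma IsPath.exists_le_card_of_forall_lt [Fintype St] {p : St → Prop} {π : ℕ → St}
    (hπ : IsPath R π) (k : ℕ) (hp : ∀ j < k, p (π j)) :
    ∃ (σ : ℕ → St) (m : ℕ), m ≤ Fintype.card St ∧ IsPath R σ ∧ σ 0 = π 0 ∧
      σ m = π k ∧ ∀ j < m, p (σ j) := by
  induction k using Nat.strong_induction_on generalizing π with
  | _ k ih =>
    by_cases hk : k ≤ Fintype.card St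
    · exact ⟨π, k, hk, hπ, rfl, rfl, hp⟩
    obtain ⟨i, j, hij, hj, hloop⟩ := exists_lt_le_card_apply_eq π
    obtain ⟨d, rfl⟩ : ∃ d, j = i + d := ⟨j - i, by omega⟩
    have hcut : ∀ t, _root_.cutLoop π i d t = π (if t ≤ i then t else t + d) := fun _ => rfl
    obtain ⟨σ, m, hm, hσ, hσ0, hσm, hσp⟩ := ih (k - d) (by omega) (hπ.cutLoop hloop)
      fun t ht => by rw [hcut]; split_ifs <;> exact hp _ (by omega)
    refine ⟨σ, m, hm, hσ, by simp [hσ0, hcut], ?_, hσp⟩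
    rw [hσm, hcut, if_neg (by omega), Nat.sub_add_cancel (by omega)]

end

/-- In a finite total Kripke structure with n states, A[φ V ψ] holds at s iff
    along every path of length n from s, either ψ holds everywhere, or there is a
    position k ≤ n with ψ holding up to and including k and φ holding at k. -/
theorem AV_iff_finite_paths {St : Type} [Fintype St]
    (R : St → St → Prop) (total : ∀ s, ∃ t, R s t)
    (φ ψ : St → Prop) (s : St) :
    SatAV R φ ψ s ↔
      ∀ π : ℕ → St, π 0 = s → (∀ i < Fintype.card St, R (π i) (π (i + 1))) →
        ((∀ i ≤ Fintype.card St, ψ (π i)) ∨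
         (∃ k ≤ Fintype.card St, (∀ i ≤ k, ψ (π i)) ∧ φ (π k))) := by
  simp_rw [release_prefix_iff]
  constructor
  · intro hsat π hπ0 hπ k hk hφ
    obtain ⟨π', hπ', hagree⟩ := exists_isPath_extend total hπ
    have hπ'0 : π' 0 = s := (hagree 0 (Nat.zero_le _)).trans hπ0
    rw [← hagree k hk]
    exact hsat π' hπ'0 hπ' k fun j hj => by rw [hagree j (by omega)]; exact hφ j hj
  · intro hfin π hπ0 hπ k hφ
    obtain ⟨σ, m, hm, hσ, hσ0, hσm, hσφ⟩ := hπ.exists_le_card_of_forall_lt (p := (¬ φ ·)) k hφ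
    rw [← hσm]
    exact hfin σ (hσ0.trans hπ0) (fun i _ => hσ i) m hm hσφ
end

section
/- In the 3SAT-to-model-repair reduction, if V is a satisfying assignment of the 3cnf formula f, then the substructure M' of M_f obtained by keeping all transitions from s0, all self-loops, and the transition s_j → t_j exactly when V(x_j) is true, is total and satisfies M', s0 ⊨ η_f. -/
/-- States of the reduction structure: s0, s_j, t_j. -/
inductive RSt (m : ℕ) : Type
  | s0 : RSt m
  | s : Fin m → RSt m
  | t : Fin m → RSt m

/-- Transitions of M_f: s0→s_j, s_j→t_j, and self-loops on every state. -/
def baseR {m : ℕ} : RSt m → RSt m → Prop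
  | RSt.s0, RSt.s _ => True
  | RSt.s0, RSt.s0 => True
  | RSt.s j, RSt.t k => j = k
  | RSt.s j, RSt.s k => j = k
  | RSt.t j, RSt.t k => j = k
  | _, _ => False

/-- A literal is a sign together with a variable index. -/
abbrev Lit (m : ℕ) := Bool × Fin m

/-- A 3cnf clause. -/
abbrev Clause (m : ℕ) := Lit m × Lit m × Lit m

def evalLit {m : ℕ} (V : Fin m → Bool) (l : Lit m) : Prop := V l.2 = l.1

/-- Satisfaction of a 3cnf formula (a list of clauses). -/
def cnfSat {m : ℕ} (f : List (Clause m)) (V : Fin m → Bool) : Prop :=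
  ∀ c ∈ f, evalLit V c.1 ∨ evalLit V c.2.1 ∨ evalLit V c.2.2

/-- Truth at s0 of the CTL conjunct associated to a literal, in the substructure
    with transition relation R'.  Since p_j labels only s_j and q_j labels only
    t_j, AG(p_j → EX q_j) says: if s_j is reachable from s0 then (s_j,t_j) ∈ R';
    AG(p_j → AX ¬q_j) says: if s_j is reachable then (s_j,t_j) ∉ R'. -/
def litHolds {m : ℕ} (R' : RSt m → RSt m → Prop) (l : Lit m) : Prop :=
  if l.1 then
    (Relation.ReflTransGen R' RSt.s0 (RSt.s l.2) → R' (RSt.s l.2) (RSt.t l.2))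
  else
    (Relation.ReflTransGen R' RSt.s0 (RSt.s l.2) → ¬ R' (RSt.s l.2) (RSt.t l.2))

/-- M', s0 ⊨ η_f. -/
def etaHolds {m : ℕ} (f : List (Clause m)) (R' : RSt m → RSt m → Prop) : Prop :=
  ∀ c ∈ f, litHolds R' c.1 ∨ litHolds R' c.2.1 ∨ litHolds R' c.2.2

/-- The substructure obtained from a satisfying assignment V: keep all edges
    from s0, all self-loops, and the edge s_j → t_j exactly when V x_j is true. -/
def repairedR {m : ℕ} (V : Fin m → Bool) : RSt m → RSt m → Prop
  | RSt.s0, RSt.s _ => True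
  | RSt.s0, RSt.s0 => True
  | RSt.s j, RSt.t k => j = k ∧ V j = true
  | RSt.s j, RSt.s k => j = k
  | RSt.t j, RSt.t k => j = k
  | _, _ => False

/-!
Reachability plays no role: `litHolds` is an implication whose conclusion only asks whether the
edge `s_j → t_j` is present, and in the repaired structure that edge is present exactly when
`V x_j` is true. So a literal made true by `V` yields a true CTL conjunct, clause by clause.
-/

section Reduction

variable {m : ℕ}

theorem repairedR_le_baseR (V : Fin m → Bool) : ∀ u v, repairedR V u v → baseR u v := by
  intro u v h
  cases u <;> cases v <;> simp_all [repairedR, baseR]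

theorem repairedR_refl (V : Fin m → Bool) : ∀ u, repairedR V u u
  | RSt.s0 => trivial
  | RSt.s _ => rfl
  | RSt.t _ => rfl

theorem repairedR_s_t_iff (V : Fin m → Bool) (j : Fin m) :
    repairedR V (RSt.s j) (RSt.t j) ↔ V j = true := by
  simp [repairedR]

variable {R' : RSt m → RSt m → Prop} {V : Fin m → Bool}

theorem litHolds_of_evalLit (hR' : ∀ j, R' (RSt.s j) (RSt.t j) ↔ V j = true) {l : Lit m}
    (hl : evalLit V l) : litHolds R' l := by
  obtain ⟨b, j⟩ := l
  cases b <;> simp_all [litHolds, evalLit]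

theorem etaHolds_of_cnfSat (hR' : ∀ j, R' (RSt.s j) (RSt.t j) ↔ V j = true)
    {f : List (Clause m)} (hV : cnfSat f V) : etaHolds f R' := fun c hc =>
  (hV c hc).imp (litHolds_of_evalLit hR')
    (Or.imp (litHolds_of_evalLit hR') (litHolds_of_evalLit hR'))

end Reduction

/-- If V satisfies f, then the repaired substructure is a total substructure of
    M_f satisfying η_f. -/
theorem satisfying_assignment_gives_repair {m : ℕ} (f : List (Clause m))
    (V : Fin m → Bool) (hV : cnfSat f V) :
    (∀ u v, repairedR V u v → baseR u v) ∧
    (∀ u, ∃ v, repairedR V u v) ∧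
    etaHolds f (repairedR V) :=
  ⟨repairedR_le_baseR V, fun u => ⟨u, repairedR_refl V u⟩,
    etaHolds_of_cnfSat (repairedR_s_t_iff V) hV⟩
end

section
/- Completeness of the repair encoding (abstract form): if there exists a total substructure M' of M with M', s0 ⊨ η, then there exists a valuation V of the variables E_{s,t} and X_{s,ψ} (ψ ∈ sub(η)) satisfying: X_{s0,η}; totality clauses ⋁_t E_{s,t} for each s; propositional labeling and consistency clauses; and the nexttime clauses X_{s,AXφ} ↔ ⋀_t (E_{s,t} → X_{t,φ}) and X_{s,EXφ} ↔ ⋁_t (E_{s,t} ∧ X_{t,φ}). (Restrict η to CTL formulas built from literals, ∧, ∨, ¬, AX, EX.) -/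
/-- CTL formulas built from atoms, ¬, ∧, ∨, AX, EX. -/
inductive CTL (AP : Type) : Type
  | atom : AP → CTL AP
  | neg : CTL AP → CTL AP
  | and : CTL AP → CTL AP → CTL AP
  | or : CTL AP → CTL AP → CTL AP
  | ax : CTL AP → CTL AP
  | ex : CTL AP → CTL AP

/-- CTL semantics over a structure with transitions R and labeling L. -/
def CTL.Sat {St AP : Type} (R : St → St → Prop) (L : St → Set AP) :
    St → CTL AP → Prop
  | s, .atom p => p ∈ L s
  | s, .neg φ => ¬ CTL.Sat R L s φ
  | s, .and φ ψ => CTL.Sat R L s φ ∧ CTL.Sat R L s ψ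
  | s, .or φ ψ => CTL.Sat R L s φ ∨ CTL.Sat R L s ψ
  | s, .ax φ => ∀ t, R s t → CTL.Sat R L t φ
  | s, .ex φ => ∃ t, R s t ∧ CTL.Sat R L t φ

/-- The set of subformulas of a CTL formula. -/
def CTL.subf {AP : Type} : CTL AP → Set (CTL AP)
  | .atom p => {.atom p}
  | .neg φ => insert (.neg φ) φ.subf
  | .and φ ψ => insert (.and φ ψ) (φ.subf ∪ ψ.subf)
  | .or φ ψ => insert (.or φ ψ) (φ.subf ∪ ψ.subf)
  | .ax φ => insert (.ax φ) φ.subf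
  | .ex φ => insert (.ex φ) φ.subf

theorem CTL.sat_ax_iff_of_le {St AP : Type} {R R' : St → St → Prop} (L : St → Set AP)
    (hsub : ∀ u v, R' u v → R u v) (s : St) (φ : CTL AP) :
    CTL.Sat R' L s (.ax φ) ↔ ∀ t, R s t → R' s t → CTL.Sat R' L t φ :=
  ⟨fun h t _ ht => h t ht, fun h t ht => h t (hsub s t ht) ht⟩

theorem CTL.sat_ex_iff_of_le {St AP : Type} {R R' : St → St → Prop} (L : St → Set AP)
    (hsub : ∀ u v, R' u v → R u v) (s : St) (φ : CTL AP) :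
    CTL.Sat R' L s (.ex φ) ↔ ∃ t, R s t ∧ R' s t ∧ CTL.Sat R' L t φ :=
  ⟨fun ⟨t, ht, hφ⟩ => ⟨t, hsub s t ht, ht, hφ⟩, fun ⟨t, _, ht, hφ⟩ => ⟨t, ht, hφ⟩⟩

theorem repair_encoding_complete_general {St AP : Type}
    (s0 : St) (R : St → St → Prop) (L : St → Set AP)
    (η : CTL AP)
    (R' : St → St → Prop)
    (hsub : ∀ u v, R' u v → R u v)
    (htot : ∀ u, ∃ v, R' u v)
    (hsat : CTL.Sat R' L s0 η) :
    ∃ (vE : St → St → Bool) (vX : St → CTL AP → Bool),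
      -- M' satisfies η
      vX s0 η = true ∧
      -- totality clauses
      (∀ s, ∃ t, R s t ∧ vE s t = true) ∧
      -- propositional labeling
      (∀ s p, CTL.atom p ∈ η.subf → (vX s (.atom p) = true ↔ p ∈ L s)) ∧
      -- propositional consistency
      (∀ s φ, CTL.neg φ ∈ η.subf → (vX s (.neg φ) = true ↔ ¬ vX s φ = true)) ∧
      (∀ s φ ψ, CTL.and φ ψ ∈ η.subf →
        (vX s (.and φ ψ) = true ↔ vX s φ = true ∧ vX s ψ = true)) ∧
      (∀ s φ ψ, CTL.or φ ψ ∈ η.subf →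
        (vX s (.or φ ψ) = true ↔ vX s φ = true ∨ vX s ψ = true)) ∧
      -- nexttime clauses
      (∀ s φ, CTL.ax φ ∈ η.subf →
        (vX s (.ax φ) = true ↔ ∀ t, R s t → vE s t = true → vX t φ = true)) ∧
      (∀ s φ, CTL.ex φ ∈ η.subf →
        (vX s (.ex φ) = true ↔ ∃ t, R s t ∧ vE s t = true ∧ vX t φ = true)) := by
  classical
  refine ⟨fun s t => decide (R' s t), fun s φ => decide (CTL.Sat R' L s φ), ?_, fun s => ?_,
    ?_, ?_, ?_, ?_, ?_, ?_⟩ <;> simp only [decide_eq_true_eq]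
  · exact hsat
  · obtain ⟨t, ht⟩ := htot s
    exact ⟨t, hsub s t ht, ht⟩
  · exact fun s p _ => Iff.rfl
  · exact fun s φ _ => Iff.rfl
  · exact fun s φ ψ _ => Iff.rfl
  · exact fun s φ ψ _ => Iff.rfl
  · exact fun s φ _ => CTL.sat_ax_iff_of_le L hsub s φ
  · exact fun s φ _ => CTL.sat_ex_iff_of_le L hsub s φ

/-- Completeness of the repair encoding (abstract form): if M has a total
    substructure M' (same initial state) with M', s0 ⊨ η, then there is a
    valuation of the E and X variables satisfying all clauses of repair(M,η). -/
theorem repair_encoding_complete {St AP : Type} [Fintype St]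
    (s0 : St) (R : St → St → Prop) (L : St → Set AP)
    (totalM : ∀ s, ∃ t, R s t)
    (η : CTL AP)
    (R' : St → St → Prop)
    (hsub : ∀ u v, R' u v → R u v)
    (htot : ∀ u, ∃ v, R' u v)
    (hsat : CTL.Sat R' L s0 η) :
    ∃ (vE : St → St → Bool) (vX : St → CTL AP → Bool),
      -- M' satisfies η
      vX s0 η = true ∧
      -- totality clauses
      (∀ s, ∃ t, R s t ∧ vE s t = true) ∧
      -- propositional labeling
      (∀ s p, CTL.atom p ∈ η.subf → (vX s (.atom p) = true ↔ p ∈ L s)) ∧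
      -- propositional consistency
      (∀ s φ, CTL.neg φ ∈ η.subf → (vX s (.neg φ) = true ↔ ¬ vX s φ = true)) ∧
      (∀ s φ ψ, CTL.and φ ψ ∈ η.subf →
        (vX s (.and φ ψ) = true ↔ vX s φ = true ∧ vX s ψ = true)) ∧
      (∀ s φ ψ, CTL.or φ ψ ∈ η.subf →
        (vX s (.or φ ψ) = true ↔ vX s φ = true ∨ vX s ψ = true)) ∧
      -- nexttime clauses
      (∀ s φ, CTL.ax φ ∈ η.subf →
        (vX s (.ax φ) = true ↔ ∀ t, R s t → vE s t = true → vX t φ = true)) ∧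
      (∀ s φ, CTL.ex φ ∈ η.subf →
        (vX s (.ex φ) = true ↔ ∃ t, R s t ∧ vE s t = true ∧ vX t φ = true)) :=
  repair_encoding_complete_general s0 R L η R' hsub htot hsat
end
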